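/- Let $D_m$ be a finite dihedral group and $V$ a complex representation of $D_m$ (possibly infinite-dimensional) such that no nonzero vector $v \in V$ satisfies $r\cdot v = t\cdot v = -v$ (i.e., the sign representation does not occur in $V$). Then the element $C = \sum_{i=0}^{m}(-1)^{m-i}(\text{sum of elements of length }i) \in \mathbb{C}[D_m]$ acts as zero on $V$. -/

import Mathlib

/-!
Regrouping the alternating sum, `C = ∑_{j<m} (-1)^{m-j} (t_j - r t_j)`, and, since `r_m = t_m`, also
`C = ∑_{j<m} (-1)^{m-j} (r_j - t r_j)`. For an involution `s`, left multiplication by `s` sends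
`g - s g` to its negative, so `r` and `t` both act by `-1` on the image of `C`. As the sign
representation does not occur in `V`, that image is zero.
-/

/-- In the dihedral group `D_m` with generators `r := sr 0` and `t := sr 1`,
`(dihWordsGrp m i).1` is the alternating word `r_i = rtr⋯` (`i` factors) and
`(dihWordsGrp m i).2` is `t_i = trt⋯` (`i` factors). -/
def dihWordsGrp (m : ℕ) : ℕ → DihedralGroup m × DihedralGroup m
  | 0 => (1, 1)
  | i + 1 => (DihedralGroup.sr 0 * (dihWordsGrp m i).2,
      DihedralGroup.sr 1 * (dihWordsGrp m i).1)

open DihedralGroup Finset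

theorem dihWordsGrp_two_mul_and_two_mul_add_one (m k : ℕ) :
    dihWordsGrp m (2 * k) = (r (k : ZMod m), r (-k : ZMod m)) ∧
      dihWordsGrp m (2 * k + 1) = (sr (-k : ZMod m), sr (1 + k : ZMod m)) := by
  induction k with
  | zero => simp [dihWordsGrp]
  | succ k ih =>
    have heven : dihWordsGrp m (2 * (k + 1)) = (r (k + 1 : ZMod m), r (-(k + 1) : ZMod m)) := by
      rw [show 2 * (k + 1) = 2 * k + 1 + 1 by ring, dihWordsGrp, ih.2]
      simp only [sr_mul_sr, Prod.mk.injEq]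
      exact ⟨congrArg r (by ring), congrArg r (by ring)⟩
    refine ⟨by rw [heven]; push_cast; rfl, ?_⟩
    rw [dihWordsGrp, heven]
    simp only [sr_mul_r, Prod.mk.injEq]
    push_cast
    exact ⟨congrArg sr (by ring), rfl⟩

theorem dihWordsGrp_self_fst_eq_snd (m : ℕ) : (dihWordsGrp m m).1 = (dihWordsGrp m m).2 := by
  obtain ⟨k, rfl | rfl⟩ := Nat.even_or_odd' m
  · have hk : (2 * k : ZMod (2 * k)) = 0 := by exact_mod_cast ZMod.natCast_self (2 * k)
    rw [(dihWordsGrp_two_mul_and_two_mul_add_one _ k).1, r.injEq]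
    linear_combination hk
  · have hk : (2 * k + 1 : ZMod (2 * k + 1)) = 0 := by
      exact_mod_cast ZMod.natCast_self (2 * k + 1)
    rw [(dihWordsGrp_two_mul_and_two_mul_add_one _ k).2, sr.injEq]
    linear_combination -hk

theorem alternating_sum_Ico_eq_sum_range_sub {k M : Type*} [CommRing k] [AddCommGroup M]
    [Module k M] {m : ℕ} (hm : 1 ≤ m) (a b : ℕ → M) :
    (-1 : k) ^ m • b 0 + a m + ∑ i ∈ Ico 1 m, (-1 : k) ^ (m - i) • (a i + b i) =
      ∑ j ∈ range m, (-1 : k) ^ (m - j) • (b j - a (j + 1)) := by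
  induction m, hm using Nat.le_induction with
  | base => simp [neg_add_eq_sub]
  | succ m hm ih =>
    have hflip {n : ℕ} (hn : n ≤ m) (x : M) :
        (-1 : k) ^ (m + 1 - n) • x = -((-1 : k) ^ (m - n) • x) := by
      rw [Nat.sub_add_comm hn, pow_succ, mul_neg_one, neg_smul]
    rw [sum_Ico_succ_top (by omega), sum_range_succ,
      sum_congr rfl fun i hi => hflip (mem_Ico.1 hi).2.le _,
      sum_congr rfl fun j hj => hflip (mem_range.1 hj).le _, sum_neg_distrib, sum_neg_distrib,
      ← ih, Nat.add_sub_cancel_left, pow_succ]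
    module

theorem Representation.mul_sum_smul_sub_mul_eq_neg {k G V ι : Type*} [CommRing k] [Monoid G]
    [AddCommGroup V] [Module k V] (ρ : Representation k G V) {s : G} (hs : s * s = 1)
    (I : Finset ι) (c : ι → k) (g : ι → G) :
    ρ s * ∑ i ∈ I, c i • (ρ (g i) - ρ (s * g i)) = -∑ i ∈ I, c i • (ρ (g i) - ρ (s * g i)) := by
  simp only [mul_sum, mul_smul_comm, mul_sub, ← map_mul, ← mul_assoc, hs, one_mul,
    ← sum_neg_distrib, ← smul_neg, neg_sub]

/-- Let `D_m` (`m ≥ 2`) be a finite dihedral group with generators `r = sr 0`, `t = sr 1`,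
and let `(V,ρ)` be a complex representation of `D_m` (possibly infinite dimensional) such
that no nonzero `v ∈ V` satisfies `r·v = t·v = -v` (the sign representation does not occur).
Then the element `C = ∑_{i=0}^{m} (-1)^{m-i} (sum of the elements of length i)` of `ℂ[D_m]`
acts as zero on `V`. Here the length-`0` element is `e`, the elements of length `i` for
`1 ≤ i ≤ m-1` are `r_i` and `t_i`, and the unique longest element is `w_{rt} = r_m = t_m`. -/
theorem C_acts_as_zero (m : ℕ) (hm : 2 ≤ m) (V : Type*) [AddCommGroup V] [Module ℂ V]
    (ρ : Representation ℂ (DihedralGroup m) V)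
    (hsign : ∀ v : V, ρ (DihedralGroup.sr 0) v = -v → ρ (DihedralGroup.sr 1) v = -v → v = 0) :
    (-1 : ℂ) ^ m • (1 : Module.End ℂ V) + ρ ((dihWordsGrp m m).1) +
      ∑ i ∈ Finset.Ico 1 m,
        (-1 : ℂ) ^ (m - i) • (ρ ((dihWordsGrp m i).1) + ρ ((dihWordsGrp m i).2)) = 0 := by
  have hr := alternating_sum_Ico_eq_sum_range_sub (k := ℂ) (one_le_two.trans hm)
    (fun i => ρ (dihWordsGrp m i).1) (fun i => ρ (dihWordsGrp m i).2)
  have ht := alternating_sum_Ico_eq_sum_range_sub (k := ℂ) (one_le_two.trans hm)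
    (fun i => ρ (dihWordsGrp m i).2) (fun i => ρ (dihWordsGrp m i).1)
  -- `r_0 = t_0 = e`, `r_{j+1} = r t_j`, `t_{j+1} = t r_j`, and `t_m = r_m`
  simp only [dihWordsGrp, map_one, ← dihWordsGrp_self_fst_eq_snd,
    add_comm (ρ (dihWordsGrp m _).2)] at hr ht
  refine LinearMap.ext fun v => hsign _ ?_ ?_
  · rw [hr]
    exact LinearMap.congr_fun (ρ.mul_sum_smul_sub_mul_eq_neg (sr_mul_self 0) _ _ _) v
  · rw [ht]
    exact LinearMap.congr_fun (ρ.mul_sum_smul_sub_mul_eq_neg (sr_mul_self 1) _ _ _) v
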